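/- For real σ, ρ, the squared modulus of the factor χ(s) = 2·Γ(s)·cos(πs/2)/(2π)^s at s = σ + iρ equals (2π)^{1−2σ}·(cosh(πρ)/π)·|Γ(σ+iρ)|²·(1 + cos(πσ)/cosh(πρ)), provided σ + iρ is not a nonpositive integer. -/

import Mathlib

open Complex Real ComplexConjugate

/-!
Since `cos s · cos s̄ = (cos (s + s̄) + cos (s - s̄)) / 2`, one has
`‖cos (πs/2)‖² = (cosh (πρ) + cos (πσ)) / 2`, while `‖(2π)^s‖ = (2π)^σ`;
the identity is then a rearrangement of the factors.
-/

theorem Complex.sq_norm_cos (z : ℂ) :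
    ‖cos z‖ ^ 2 = (Real.cosh (2 * z.im) + Real.cos (2 * z.re)) / 2 := by
  have key : 2 * cos z * conj (cos z) = cos (2 * z.re) + cos (2 * z.im * I) := by
    rw [← cos_conj, show (2 * z.re : ℂ) = z + conj z by rw [add_conj]; push_cast; ring,
      show (2 * z.im * I : ℂ) = z - conj z by rw [sub_conj]; push_cast; ring, cos_add_cos]
    ring_nf
  rw [cos_mul_I, mul_assoc, mul_conj] at key
  rw [Complex.sq_norm]
  apply ofReal_injective
  push_cast
  linear_combination key / 2

theorem Complex.sq_norm_ofReal_cpow {x : ℝ} (hx : 0 < x) (s : ℂ) :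
    ‖(x : ℂ) ^ s‖ ^ 2 = x ^ (2 * s.re) := by
  rw [norm_cpow_eq_rpow_re_of_pos hx, mul_comm, Real.rpow_mul hx.le, Real.rpow_two]

theorem abs_chi_sq_general (σ ρ : ℝ) :
    ‖(2 * Complex.Gamma ((σ : ℂ) + I * ρ) *
        Complex.cos (π * ((σ : ℂ) + I * ρ) / 2) / (2 * π) ^ ((σ : ℂ) + I * ρ) : ℂ)‖ ^ 2 =
      (2 * π) ^ (1 - 2 * σ) * (Real.cosh (π * ρ) / π) *
        ‖Complex.Gamma ((σ : ℂ) + I * ρ)‖ ^ 2 *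
        (1 + Real.cos (π * σ) / Real.cosh (π * ρ)) := by
  have h2π : (0 : ℝ) < 2 * π := by positivity
  have hcosh : Real.cosh (π * ρ) ≠ 0 := (Real.cosh_pos _).ne'
  have hcos := Complex.sq_norm_cos (π * ((σ : ℂ) + I * ρ) / 2)
  have hpow := Complex.sq_norm_ofReal_cpow h2π ((σ : ℂ) + I * ρ)
  push_cast at hpow
  simp only [div_ofNat_re, div_ofNat_im, mul_re, mul_im, add_re, add_im, ofReal_re, ofReal_im,
    I_re, I_im] at hcos hpow
  rw [norm_div, norm_mul, norm_mul, div_pow, mul_pow, mul_pow, hcos, hpow, Real.rpow_sub h2π,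
    Real.rpow_one, Complex.norm_two]
  field_simp
  ring_nf

theorem abs_chi_sq (σ ρ : ℝ) (h : ∀ n : ℕ, (σ : ℂ) + I * ρ ≠ -n) :
    ‖(2 * Complex.Gamma ((σ : ℂ) + I * ρ) *
        Complex.cos (π * ((σ : ℂ) + I * ρ) / 2) / (2 * π) ^ ((σ : ℂ) + I * ρ) : ℂ)‖ ^ 2 =
      (2 * π) ^ (1 - 2 * σ) * (Real.cosh (π * ρ) / π) *
        ‖Complex.Gamma ((σ : ℂ) + I * ρ)‖ ^ 2 *
        (1 + Real.cos (π * σ) / Real.cosh (π * ρ)) :=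
  abs_chi_sq_general σ ρ
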